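/- If a tournament T has no sink (no vertex of out-degree zero), then T has at least two distinct vertices with the second neighborhood property. -/

import Mathlib

/-!
Take a median order of `T`, i.e. a vertex ordering with the maximum number of forward arcs. Its
last vertex `f` has the SNP (Havet–Thomassé): call a vertex bad for `f` if it is neither an
out-neighbour nor a second out-neighbour of `f`. If `f` had more out-neighbours than second
out-neighbours, moving the bad vertices to the front, followed by `f` (the sedimentation of the
order), would gain arcs; by induction over suffixes of the order it suffices to check this when
every proper suffix satisfies the inequality.

For the second vertex, among the median orders of `T - f` take one that places the
out-neighbours of `f` as late as possible, and let `g` be its last vertex. Appending `f` gives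
again a median order of `T`, so `g → f` and the first argument applies to `g`. If `g` failed
the SNP we would be in the tight case, where the sedimentation for `g` is again a median order;
none of the bad vertices of `g` is an out-neighbour of `f` (it would be a second out-neighbour
of `g` through `f`), and since `f` is not a sink the sedimentation pushes at least one
out-neighbour of `f` later, contradicting the choice of the order.
-/

variable {V : Type*}

/-- Out-neighborhood of `v`. -/
def Nplus (A : V → V → Prop) (v : V) : Set V := {u | A v u}

/-- In-neighborhood of `v`. -/
def Nminus (A : V → V → Prop) (v : V) : Set V := {u | A u v}

/-- Second out-neighborhood: vertices at directed distance exactly 2 from `v`. -/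
def Npp (A : V → V → Prop) (v : V) : Set V :=
  {u | u ≠ v ∧ ¬ A v u ∧ ∃ w, A v w ∧ A w u}

/-- The second neighborhood property. -/
def SNP (A : V → V → Prop) (v : V) : Prop := (Nplus A v).ncard ≤ (Npp A v).ncard

/-- A digraph (given by its arc relation) has no digons: no 2-cycles (this also rules out loops when stated for `u = v`). -/
def NoDigons (A : V → V → Prop) : Prop := ∀ u v, ¬ (A u v ∧ A v u)

/-- A tournament: an orientation of a complete graph. -/
def IsTournament (A : V → V → Prop) : Prop :=
  (∀ v, ¬ A v v) ∧ ∀ u v : V, u ≠ v → (A u v ↔ ¬ A v u)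

/-- `u v` is a missing edge: distinct and non-adjacent. -/
def MissingEdge (A : V → V → Prop) (u v : V) : Prop := u ≠ v ∧ ¬ A u v ∧ ¬ A v u

/-- `x₁y₁` loses to `x₂y₂` (with this labelling of endpoints). -/
def LosesAt (A : V → V → Prop) (x₁ y₁ x₂ y₂ : V) : Prop :=
  A x₁ x₂ ∧ ¬ A x₁ y₂ ∧ y₂ ∉ Npp A x₁ ∧ A y₁ y₂ ∧ ¬ A y₁ x₂ ∧ x₂ ∉ Npp A y₁

/-- The losing relation between (unordered) missing edges: the arcs of the dependency digraph. -/
def EdgeLoses (A : V → V → Prop) (e e' : Sym2 V) : Prop :=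
  ∃ x₁ y₁ x₂ y₂, e = s(x₁, y₁) ∧ e' = s(x₂, y₂) ∧
    MissingEdge A x₁ y₁ ∧ MissingEdge A x₂ y₂ ∧ LosesAt A x₁ y₁ x₂ y₂


open Classical

namespace IsTournament

variable {A : V → V → Prop} {u v : V}

lemma ne_of_rel (hT : IsTournament A) (h : A u v) : u ≠ v := by
  rintro rfl
  exact hT.1 u h

lemma not_rel_of_rel (hT : IsTournament A) (h : A u v) : ¬A v u :=
  (hT.2 u v (hT.ne_of_rel h)).1 h

lemma rel_of_not_rel (hT : IsTournament A) (hne : u ≠ v) (h : ¬A v u) : A u v :=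
  (hT.2 u v hne).2 h

end IsTournament

lemma List.Nodup.ncard_eq_countP {s : Set V} {l : List V} (hl : l.Nodup)
    (hs : ∀ x ∈ s, x ∈ l) : s.ncard = l.countP (· ∈ s) := by
  have : s = ((l.filter (· ∈ s)).toFinset : Set V) := by
    ext x
    simpa using fun hx => hs x hx
  rw [List.countP_eq_length_filter, ← List.toFinset_card_of_nodup (hl.filter _),
    ← Set.ncard_coe_finset, ← this]

namespace MedianOrder

noncomputable def forwardArcs (A : V → V → Prop) : List V → ℕ
  | [] => 0
  | x :: l => l.countP (A x ·) + forwardArcs A l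

/-- A median order of the subtournament spanned by the vertices of `l`. -/
def IsMedianOrder (A : V → V → Prop) (l : List V) : Prop :=
  ∀ l', l'.Perm l → forwardArcs A l' ≤ forwardArcs A l

variable {A : V → V → Prop}

@[simp] lemma forwardArcs_nil : forwardArcs A [] = 0 := rfl

@[simp] lemma forwardArcs_cons (x : V) (l : List V) :
    forwardArcs A (x :: l) = l.countP (A x ·) + forwardArcs A l := rfl

lemma forwardArcs_append_cons (X Y : List V) (y : V) :
    forwardArcs A (X ++ y :: Y) =
      forwardArcs A (X ++ Y) + X.countP (A · y) + Y.countP (A y ·) := by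
  induction X with
  | nil => simp only [List.nil_append, forwardArcs_cons, List.countP_nil, add_zero]; omega
  | cons x X ih =>
    simp only [List.cons_append, forwardArcs_cons, List.countP_append, List.countP_cons, ih]
    omega

lemma forwardArcs_append_singleton (X : List V) (y : V) :
    forwardArcs A (X ++ [y]) = forwardArcs A X + X.countP (A · y) := by
  simpa using forwardArcs_append_cons (A := A) X [] y

lemma IsMedianOrder.of_perm {l l' : List V} (h : IsMedianOrder A l) (hp : l'.Perm l)
    (hw : forwardArcs A l ≤ forwardArcs A l') : IsMedianOrder A l' :=
  fun m hm => (h m (hm.trans hp)).trans hw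

lemma IsMedianOrder.of_cons {x : V} {l : List V} (h : IsMedianOrder A (x :: l)) :
    IsMedianOrder A l := fun l' hp => by
  have := h (x :: l') (hp.cons x)
  rw [forwardArcs_cons, forwardArcs_cons, hp.countP_eq] at this
  omega

lemma IsMedianOrder.of_isSuffix {l s : List V} (h : IsMedianOrder A l) (hs : s <:+ l) :
    IsMedianOrder A s := by
  obtain ⟨t, rfl⟩ := hs
  induction t with
  | nil => exact h
  | cons x t ih => exact ih h.of_cons

lemma IsMedianOrder.of_append_singleton {K : List V} {f : V}
    (h : IsMedianOrder A (K ++ [f])) : IsMedianOrder A K := fun K' hp => by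
  have := h (K' ++ [f]) (hp.append_right [f])
  rw [forwardArcs_append_singleton, forwardArcs_append_singleton, hp.countP_eq] at this
  omega

lemma IsMedianOrder.append_singleton_of_perm {K K' : List V} {f : V}
    (h : IsMedianOrder A (K ++ [f])) (h' : IsMedianOrder A K') (hp : K'.Perm K) :
    IsMedianOrder A (K' ++ [f]) := by
  refine h.of_perm (hp.append_right [f]) ?_
  rw [forwardArcs_append_singleton, forwardArcs_append_singleton, hp.countP_eq]
  have := h' K hp.symm
  omega

lemma exists_isMedianOrder (A : V → V → Prop) (l : List V) :
    ∃ m, m.Perm l ∧ IsMedianOrder A m := by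
  obtain ⟨m, hm, hmax⟩ :=
    l.permutations.toFinset.exists_max_image (forwardArcs A) ⟨l, by simp⟩
  simp only [List.mem_toFinset, List.mem_permutations] at hm hmax
  exact ⟨m, hm, fun m' hm' => hmax m' (hm'.trans hm)⟩

lemma exists_isMedianOrder_forall_le (A : V → V → Prop) (φ : List V → ℕ) (l : List V) :
    ∃ m, m.Perm l ∧ IsMedianOrder A m ∧
      ∀ m', m'.Perm l → IsMedianOrder A m' → φ m' ≤ φ m := by
  obtain ⟨m₀, hm₀, hmed⟩ := exists_isMedianOrder A l
  obtain ⟨m, hm, hφ⟩ := (l.permutations.toFinset.filter (IsMedianOrder A)).exists_max_image φ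
    ⟨m₀, by simp [hm₀, hmed]⟩
  simp only [Finset.mem_filter, List.mem_toFinset, List.mem_permutations] at hm hφ
  exact ⟨m, hm.1, hm.2, fun m' hp hm' => hφ m' ⟨hp, hm'⟩⟩

lemma forwardArcs_le_filter_append_filter (q : V → Prop) (S : List V)
    (h : ∀ P x, P ++ [x] <+: S → q x →
      (P.filter (¬q ·)).countP (A · x) ≤ (P.filter (¬q ·)).countP (A x ·)) :
    forwardArcs A S ≤ forwardArcs A (S.filter (q ·) ++ S.filter (¬q ·)) := by
  induction S using List.reverseRecOn with
  | nil => simp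
  | append_singleton S x ih =>
    have ih := ih fun P y hP => h P y (hP.trans (List.prefix_append S [x]))
    have hsplit := List.countP_eq_countP_filter_add S (A · x) (q ·)
    simp only [decide_not] at ih hsplit ⊢
    by_cases hx : q x
    · have := h S x List.prefix_rfl hx
      simp only [decide_not] at this
      simp only [List.filter_append, List.filter_singleton, hx, decide_true, Bool.not_true,
        cond_true, cond_false, List.append_assoc, List.singleton_append, List.append_nil,
        forwardArcs_append_cons, List.countP_nil]
      omega
    · simp only [List.filter_append, List.filter_singleton, hx, decide_false, Bool.not_false,
        cond_true, cond_false, List.append_nil, ← List.append_assoc,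
        forwardArcs_append_singleton, List.countP_append]
      omega

def IsBadFor (A : V → V → Prop) (g x : V) : Prop := ¬A g x ∧ x ∉ Npp A g

noncomputable def sediment (A : V → V → Prop) (g : V) (S : List V) : List V :=
  S.filter (IsBadFor A g ·) ++ g :: S.filter (¬IsBadFor A g ·)

lemma sediment_perm (g : V) (S : List V) : (sediment A g S).Perm (S ++ [g]) := by
  refine List.perm_middle.trans ((List.Perm.cons g ?_).trans (List.perm_append_singleton g S).symm)
  simpa only [decide_not] using List.filter_append_perm (IsBadFor A g ·) S

lemma forwardArcs_le_forwardArcs_filter_isBadFor (hT : IsTournament A) {g : V} {S : List V}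
    (hg : g ∉ S) (hS : S.countP (· ∈ Npp A g) ≤ S.countP (A g ·))
    (hsuf : ∀ x R, x :: R <:+ S → R.countP (A g ·) ≤ R.countP (· ∈ Npp A g)) :
    forwardArcs A S ≤
      forwardArcs A (S.filter (IsBadFor A g ·) ++ S.filter (¬IsBadFor A g ·)) := by
  refine forwardArcs_le_filter_append_filter _ S fun P x ⟨R, hR⟩ hx => ?_
  have hxg : x ≠ g := ne_of_mem_of_not_mem (by simp [← hR]) hg
  have hpre : P.countP (· ∈ Npp A g) ≤ P.countP (A g ·) := by
    have := hsuf x R ⟨P, by simpa using hR⟩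
    rw [← hR] at hS
    simp only [List.append_assoc, List.singleton_append, List.countP_append,
      List.countP_cons, hx.1, hx.2, decide_false] at hS
    omega
  have hback : ∀ n, A n x → ¬A g n := fun n hnx hgn => hx.2 ⟨hxg, hx.1, n, hgn, hnx⟩
  calc (P.filter (¬IsBadFor A g ·)).countP (A · x)
      ≤ P.countP (· ∈ Npp A g) := by
        rw [List.countP_filter]
        refine List.countP_mono_left fun n _ => ?_
        simp only [IsBadFor, Bool.and_eq_true, decide_eq_true_eq, not_and, not_not]
        exact fun ⟨hnx, hnb⟩ => hnb (hback n hnx)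
    _ ≤ P.countP (A g ·) := hpre
    _ ≤ (P.filter (¬IsBadFor A g ·)).countP (A x ·) := by
        rw [List.countP_filter]
        refine List.countP_mono_left fun n _ hgn => ?_
        simp only [decide_eq_true_eq] at hgn
        simp only [IsBadFor, Bool.and_eq_true, decide_eq_true_eq, hgn, not_true_eq_false,
          false_and, not_false_eq_true, and_true]
        exact hT.rel_of_not_rel (fun h => hx.1 (h ▸ hgn)) (fun hnx => hback n hnx hgn)

lemma countP_filter_isBadFor_rel (hT : IsTournament A) {g : V} {S : List V} (hg : g ∉ S) :
    (S.filter (IsBadFor A g ·)).countP (A · g) = S.countP (IsBadFor A g ·) := by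
  rw [List.countP_eq_length.2, ← List.countP_eq_length_filter]
  intro x hx
  obtain ⟨hxS, hxb⟩ := List.mem_filter.1 hx
  exact decide_eq_true (hT.rel_of_not_rel (ne_of_mem_of_not_mem hxS hg) (of_decide_eq_true hxb).1)

lemma forwardArcs_append_singleton_eq_add_countP (hT : IsTournament A) {g : V} {S : List V}
    (hg : g ∉ S) :
    forwardArcs A (S ++ [g]) =
      forwardArcs A S + S.countP (IsBadFor A g ·) + S.countP (· ∈ Npp A g) := by
  rw [forwardArcs_append_singleton, List.countP_eq_countP_filter_add S _ (IsBadFor A g ·),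
    countP_filter_isBadFor_rel hT hg, List.countP_filter, add_assoc]
  congr 2
  refine List.countP_congr fun x hx => ?_
  simp only [Bool.and_eq_true, Bool.not_eq_true', decide_eq_false_iff_not, decide_eq_true_eq]
  simp only [IsBadFor, not_and, not_not]
  exact ⟨fun ⟨hxg, hb⟩ => hb (hT.not_rel_of_rel hxg),
    fun h => ⟨hT.rel_of_not_rel (ne_of_mem_of_not_mem hx hg) h.2.1, fun _ => h⟩⟩

lemma forwardArcs_sediment (hT : IsTournament A) {g : V} {S : List V} (hg : g ∉ S) :
    forwardArcs A (sediment A g S) =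
      forwardArcs A (S.filter (IsBadFor A g ·) ++ S.filter (¬IsBadFor A g ·)) +
        S.countP (IsBadFor A g ·) + S.countP (A g ·) := by
  rw [sediment, forwardArcs_append_cons, countP_filter_isBadFor_rel hT hg, List.countP_filter]
  congr 1
  refine List.countP_congr fun x _ => ?_
  simp only [IsBadFor, Bool.and_eq_true, decide_eq_true_eq, not_and, not_not]
  exact ⟨And.left, fun h => ⟨h, fun h' => absurd h h'⟩⟩

lemma forwardArcs_append_add_le_sediment (hT : IsTournament A) {g : V} {S : List V}
    (hg : g ∉ S) (hS : S.countP (· ∈ Npp A g) ≤ S.countP (A g ·))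
    (hsuf : ∀ x R, x :: R <:+ S → R.countP (A g ·) ≤ R.countP (· ∈ Npp A g)) :
    forwardArcs A (S ++ [g]) + S.countP (A g ·) ≤
      forwardArcs A (sediment A g S) + S.countP (· ∈ Npp A g) := by
  have := forwardArcs_le_forwardArcs_filter_isBadFor hT hg hS hsuf
  rw [forwardArcs_append_singleton_eq_add_countP hT hg, forwardArcs_sediment hT hg]
  omega

lemma countP_rel_le_countP_Npp (hT : IsTournament A) {g : V} {K : List V}
    (hnd : (K ++ [g]).Nodup) (hK : IsMedianOrder A (K ++ [g])) :
    K.countP (A g ·) ≤ K.countP (· ∈ Npp A g) := by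
  induction hn : K.length using Nat.strong_induction_on generalizing K with
  | _ n ih =>
  by_contra! hlt
  have hg : g ∉ K := (List.nodup_cons.1 ((List.perm_append_singleton g K).nodup_iff.1 hnd)).1
  have hsuf : ∀ x R, x :: R <:+ K → R.countP (A g ·) ≤ R.countP (· ∈ Npp A g) := by
    intro x R hR
    have hR' : R ++ [g] <:+ K ++ [g] :=
      List.suffix_append_self_iff.2 ((List.suffix_cons x R).trans hR)
    have hlen : R.length < n := hn ▸ Nat.lt_of_lt_of_le (by simp) hR.length_le
    exact ih R.length hlen (hnd.sublist hR'.sublist) (hK.of_isSuffix hR') rfl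
  have := forwardArcs_append_add_le_sediment hT hg hlt.le hsuf
  have := hK _ (sediment_perm (A := A) g K)
  omega

lemma snp_of_isMedianOrder_append_singleton (hT : IsTournament A) {K : List V} {f : V}
    (hnd : (K ++ [f]).Nodup) (hall : ∀ v, v ∈ K ++ [f]) (hK : IsMedianOrder A (K ++ [f])) :
    SNP A f := by
  have hmem : ∀ v, v ≠ f → v ∈ K := fun v hv => by simpa [hv] using hall v
  have hKnd := hnd.sublist (List.sublist_append_left K [f])
  rw [SNP, hKnd.ncard_eq_countP (s := Nplus A f) fun v hv => hmem v (hT.ne_of_rel hv).symm,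
    hKnd.ncard_eq_countP (s := Npp A f) fun v hv => hmem v hv.1]
  exact countP_rel_le_countP_Npp hT hnd hK

lemma IsMedianOrder.rel_of_append_pair (hT : IsTournament A) {X : List V} {y z : V}
    (hne : y ≠ z) (h : IsMedianOrder A (X ++ [y, z])) : A y z := by
  by_contra hyz
  have := h (X ++ [z, y]) ((List.Perm.swap y z []).append_left X)
  simp only [forwardArcs_append_cons, List.append_nil, List.countP_singleton, List.countP_nil,
    hyz, hT.rel_of_not_rel hne.symm hyz, decide_true, decide_false, Bool.false_eq_true,
    ↓reduceIte] at this
  omega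

/-- `forwardArcs (fun _ => p)` is the sum of the positions of the `p`-vertices. -/
lemma forwardArcs_lt_forwardArcs_sediment {p : V → Prop} {g : V} {S : List V}
    (hbad : ∀ x ∈ S, IsBadFor A g x → ¬p x) (hg : ¬p g) (hp : ∃ u ∈ S, p u) :
    forwardArcs (fun _ => p) (S ++ [g]) < forwardArcs (fun _ => p) (sediment A g S) := by
  have hle := forwardArcs_le_filter_append_filter (A := fun _ => p) (IsBadFor A g ·) S
    fun P x hP hx => by
      simp [hbad x (hP.subset (by simp)) hx]
  obtain ⟨u, hu, hpu⟩ := hp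
  have hu : u ∈ S.filter (¬IsBadFor A g ·) :=
    List.mem_filter.2 ⟨hu, by simpa using fun hb => hbad u hu hb hpu⟩
  have hpos : 0 < (S.filter (¬IsBadFor A g ·)).countP (p ·) :=
    List.countP_pos_iff.2 ⟨u, hu, by simpa using hpu⟩
  rw [forwardArcs_append_singleton, sediment, forwardArcs_append_cons]
  simp only [hg, decide_false, List.countP_false, Function.const_apply]
  omega

lemma snp_iff_countP_lt (hT : IsTournament A) {P : List V} {g f : V}
    (hnd : (P ++ [g] ++ [f]).Nodup) (hall : ∀ v, v ∈ P ++ [g] ++ [f]) (hgf : A g f) :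
    SNP A g ↔ P.countP (A g ·) < P.countP (· ∈ Npp A g) := by
  have hPfnd : (P ++ [f]).Nodup := hnd.sublist ((List.sublist_append_left P [g]).append_right [f])
  have hmemP : ∀ v, v ≠ g → v ≠ f → v ∈ P := fun v hvg hvf => by
    simpa [hvg, hvf] using hall v
  have hout : (Nplus A g).ncard = P.countP (A g ·) + 1 := by
    rw [hPfnd.ncard_eq_countP (s := Nplus A g) fun v hv => ?_]
    · have : f ∈ Nplus A g := hgf
      rw [List.countP_append, List.countP_singleton, if_pos (decide_eq_true this)]
      rfl
    · by_cases hvf : v = f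
      · simp [hvf]
      · exact List.mem_append_left _ (hmemP v (hT.ne_of_rel hv).symm hvf)
  have hsec : (Npp A g).ncard = P.countP (· ∈ Npp A g) :=
    (hPfnd.sublist (List.sublist_append_left _ _)).ncard_eq_countP fun v hv =>
      hmemP v hv.1 fun h => hv.2.1 (h ▸ hgf)
  rw [SNP, hout, hsec, Nat.add_one_le_iff]

lemma snp_of_isMedianOrder_of_forall_le (hT : IsTournament A) {P : List V} {g f : V}
    (hnd : (P ++ [g] ++ [f]).Nodup) (hall : ∀ v, v ∈ P ++ [g] ++ [f])
    (hmed : IsMedianOrder A (P ++ [g] ++ [f]))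
    (hmax : ∀ M, M.Perm (P ++ [g]) → IsMedianOrder A M →
      forwardArcs (fun _ => A f) M ≤ forwardArcs (fun _ => A f) (P ++ [g]))
    (hf : ∃ u, A f u) : SNP A g := by
  have hPgnd : (P ++ [g]).Nodup := hnd.sublist (List.sublist_append_left _ _)
  have hgP : g ∉ P := (List.nodup_cons.1 ((List.perm_append_singleton g P).nodup_iff.1 hPgnd)).1
  have hgf : A g f := by
    have hgf' : IsMedianOrder A (P ++ [g, f]) := by rwa [List.append_assoc] at hmed
    refine hgf'.rel_of_append_pair hT fun h => ?_
    subst h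
    simp [List.nodup_append] at hnd
  have hPg : IsMedianOrder A (P ++ [g]) := hmed.of_append_singleton
  have hsuf : ∀ R, R <:+ P → R.countP (A g ·) ≤ R.countP (· ∈ Npp A g) := fun R hR =>
    have hR' : R ++ [g] <:+ P ++ [g] := List.suffix_append_self_iff.2 hR
    countP_rel_le_countP_Npp hT (hPgnd.sublist hR'.sublist) (hPg.of_isSuffix hR')
  rw [snp_iff_countP_lt hT hnd hall hgf]
  by_contra! htight
  have hw := forwardArcs_append_add_le_sediment hT hgP htight
    fun x R h => hsuf R ((List.suffix_cons x R).trans h)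
  have hsed : IsMedianOrder A (sediment A g P) :=
    hPg.of_perm (sediment_perm g P) (by have := hsuf P List.suffix_rfl; omega)
  obtain ⟨u, hu⟩ := hf
  have hug : u ≠ g := fun h => hT.not_rel_of_rel hgf (h ▸ hu)
  have huP : u ∈ P := by simpa [hug, (hT.ne_of_rel hu).symm] using hall u
  have hpot := forwardArcs_lt_forwardArcs_sediment (A := A) (p := A f) (S := P)
    (fun x hx hb hfx => hb.2 ⟨by rintro rfl; exact hgP hx, hb.1, f, hgf, hfx⟩)
    (hT.not_rel_of_rel hgf) ⟨u, huP, hu⟩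
  have := hmax _ (sediment_perm g P) hsed
  omega

end MedianOrder

open MedianOrder in
/-- A tournament with no sink has at least two vertices with the SNP. -/
theorem tournament_no_sink_two_SNP_vertices [Fintype V] [Nonempty V]
    (A : V → V → Prop) (hT : IsTournament A)
    (hNoSink : ∀ v : V, ∃ u : V, A v u) :
    ∃ v w : V, v ≠ w ∧ SNP A v ∧ SNP A w := by
  obtain ⟨L, hLu, hL⟩ := exists_isMedianOrder A (Finset.univ : Finset V).toList
  have hLnd : L.Nodup := hLu.nodup_iff.2 (Finset.nodup_toList _)
  have hLall : ∀ v, v ∈ L := fun v => hLu.mem_iff.2 (by simp)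
  obtain ⟨K, f, rfl⟩ := L.eq_nil_or_concat'.resolve_left fun h => by
    simpa [h] using hLall (Classical.arbitrary V)
  obtain ⟨Ks, hKsK, hKs, hmax⟩ :=
    exists_isMedianOrder_forall_le A (forwardArcs (fun _ => A f)) K
  have hKsnd : (Ks ++ [f]).Nodup := (hKsK.append_right [f]).nodup_iff.2 hLnd
  have hKsall : ∀ v, v ∈ Ks ++ [f] := fun v => (hKsK.append_right [f]).mem_iff.2 (hLall v)
  obtain ⟨P, g, rfl⟩ := Ks.eq_nil_or_concat'.resolve_left fun h => by
    obtain ⟨u, hu⟩ := hNoSink f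
    simpa [h, (hT.ne_of_rel hu).symm] using hKsall u
  refine ⟨f, g, ?_, snp_of_isMedianOrder_append_singleton hT hLnd hLall hL,
    snp_of_isMedianOrder_of_forall_le hT hKsnd hKsall (hL.append_singleton_of_perm hKs hKsK)
      (fun M hM hMmed => hmax M (hM.trans hKsK) hMmed) (hNoSink f)⟩
  rintro rfl
  simp [List.nodup_append] at hKsnd
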